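/- Let D₁ and D₂ be properly convex open sets in the real projective plane with the closure of D₂ contained in D₁. Then there exists a constant C > 1 such that for all x, y ∈ D₂, the Hilbert distance d_{D₂}(x,y) ≥ C · d_{D₁}(x,y). -/

import Mathlib

/-- A properly convex domain in an affine chart of the projective plane. -/
def ProperlyConvex (D : Set (ℝ × ℝ)) : Prop :=
  Convex ℝ D ∧ IsOpen D ∧ Bornology.IsBounded D ∧ D.Nonempty

/-- `d` is the Hilbert metric of `D`: `d x y = (1/2) log [a:x:y:b]` where `a, b` are
the boundary points of the chord through `x, y` with `a, y` separating `x, b`. -/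
def IsHilbertDist (D : Set (ℝ × ℝ)) (d : ℝ × ℝ → ℝ × ℝ → ℝ) : Prop :=
  (∀ x ∈ D, d x x = 0) ∧
  ∀ x ∈ D, ∀ y ∈ D, x ≠ y →
    ∀ a ∈ frontier D, ∀ b ∈ frontier D,
      x ∈ openSegment ℝ a y → y ∈ openSegment ℝ x b →
      d x y = (1 / 2) * Real.log ((dist a y / dist a x) * (dist b x / dist b y))

/-!
Write the boundary point of `D` on the ray from `x` away from `y` as `x + s • (x - y)` with
`s > 0`; the cross-ratio factor `dist a y / dist a x` is then `1 + s⁻¹`. Since `closure D₂` is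
compact inside the open set `D₁`, it keeps a distance `δ > 0` from `frontier D₁`; so enlarging
`D₂` to `D₁` moves each boundary point at least `δ` further out, i.e. increases `s` by at least
`δ / dist x y`, while `(1 + s) * dist x y ≤ diam D₂`. Because `log (1 + s⁻¹)` drops by a
definite fraction when `s` grows by a fixed multiple of `s + 1`, each of the two logarithms,
hence `d`, shrinks by the factor `1 + δ / (diam D₂ + 1)`.
-/

open Real Metric Bornology Set

theorem mul_log_one_add_inv_le {s t κ : ℝ} (hs : 0 < s) (hκ : 0 ≤ κ) (hst : s + κ * (s + 1) ≤ t) :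
    (1 + κ) * log (1 + t⁻¹) ≤ log (1 + s⁻¹) := by
  have hr : 0 < s + κ * (s + 1) := by positivity
  set r := s + κ * (s + 1)
  have ht : 0 < t := hr.trans_le hst
  have hmono : log (1 + t⁻¹) ≤ log (1 + r⁻¹) :=
    log_le_log (by positivity) (by gcongr)
  have hupper : log (1 + r⁻¹) ≤ r⁻¹ := by
    linarith [log_le_sub_one_of_pos (x := 1 + r⁻¹) (by positivity)]
  have hgain : κ * r⁻¹ ≤ log (1 + s⁻¹) - log (1 + r⁻¹) := by
    have hq : 0 < (1 + s⁻¹) / (1 + r⁻¹) := by positivity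
    calc κ * r⁻¹ = 1 - ((1 + s⁻¹) / (1 + r⁻¹))⁻¹ := by
          simp only [r]; field_simp; ring
      _ ≤ log ((1 + s⁻¹) / (1 + r⁻¹)) := one_sub_inv_le_log_of_pos hq
      _ = log (1 + s⁻¹) - log (1 + r⁻¹) := log_div (by positivity) (by positivity)
  nlinarith

theorem IsCompact.exists_pos_forall_le_dist {α : Type*} [PseudoMetricSpace α] {K F : Set α}
    (hK : IsCompact K) (hF : IsClosed F) (hKF : Disjoint K F) :
    ∃ δ > 0, ∀ p ∈ K, ∀ q ∈ F, δ ≤ dist p q := by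
  obtain ⟨r, hr, h⟩ := Metric.exists_pos_forall_lt_edist hK hF hKF
  refine ⟨r, hr, fun p hp q hq => ?_⟩
  have := h p hp q hq
  rw [edist_nndist, ENNReal.coe_lt_coe, ← NNReal.coe_lt_coe, coe_nndist] at this
  exact this.le

section NormedSpace

variable {E : Type*} [NormedAddCommGroup E] [NormedSpace ℝ E]

theorem dist_add_smul_sub_left (x y : E) (s : ℝ) : dist (x + s • (x - y)) x = |s| * dist x y := by
  rw [dist_comm, dist_self_add_right, norm_smul, Real.norm_eq_abs, dist_eq_norm]

theorem dist_add_smul_sub_right (x y : E) (s : ℝ) :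
    dist (x + s • (x - y)) y = |1 + s| * dist x y := by
  rw [dist_eq_norm, show x + s • (x - y) - y = (1 + s) • (x - y) by module, norm_smul,
    Real.norm_eq_abs, dist_eq_norm]

theorem left_mem_openSegment_add_smul_sub (x y : E) {s : ℝ} (hs : 0 < s) :
    x ∈ openSegment ℝ (x + s • (x - y)) y := by
  refine ⟨1 / (1 + s), s / (1 + s), by positivity, by positivity, by field_simp, ?_⟩
  match_scalars
  · field_simp
  · field_simp; ring

theorem exists_pos_add_smul_mem_frontier {D : Set E} (hD : IsOpen D) (hb : IsBounded D)
    {p v : E} (hp : p ∈ D) (hv : v ≠ 0) : ∃ t : ℝ, 0 < t ∧ p + t • v ∈ frontier D := by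
  set f : ℝ → E := fun t => p + t • v
  have hf : Continuous f := by fun_prop
  set F : Set ℝ := Ici 0 ∩ f ⁻¹' Dᶜ
  have hFne : F.Nonempty := by
    obtain ⟨r, hr⟩ := hb.subset_closedBall p
    have hv' : 0 < ‖v‖ := norm_pos_iff.2 hv
    refine ⟨(|r| + 1) / ‖v‖, mem_Ici.2 (by positivity), fun hmem => ?_⟩
    have := mem_closedBall.1 (hr hmem)
    rw [dist_comm, dist_self_add_right, norm_smul, Real.norm_eq_abs, abs_of_nonneg (by positivity),
      div_mul_cancel₀ _ hv'.ne'] at this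
    linarith [le_abs_self r]
  have hFbdd : BddBelow F := ⟨0, fun t ht => ht.1⟩
  set T := sInf F
  have hTF : T ∈ F :=
    (isClosed_Ici.inter (hD.isClosed_compl.preimage hf)).csInf_mem hFne hFbdd
  have hT : 0 < T := lt_of_le_of_ne hTF.1 fun h => hTF.2 (by simpa [f, ← h] using hp)
  have hIco : Ico 0 T ⊆ f ⁻¹' D := fun t ht =>
    by_contra fun h => (csInf_le hFbdd ⟨ht.1, h⟩).not_gt ht.2
  have hcl : f T ∈ closure D := by
    refine hf.closure_preimage_subset D (closure_mono hIco ?_)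
    rw [closure_Ico hT.ne]
    exact ⟨hT.le, le_rfl⟩
  refine ⟨T, hT, ?_⟩
  rw [hD.frontier_eq]
  exact ⟨hcl, hTF.2⟩

theorem exists_add_smul_mem_frontier_log_le {D K : Set E} (hD : IsOpen D) (hDb : IsBounded D)
    (hKD : K ⊆ D) (hK : IsBounded K) {δ : ℝ} (hδ : 0 ≤ δ)
    (hgap : ∀ p ∈ K, ∀ q ∈ frontier D, δ ≤ dist p q)
    ⦃x y : E⦄ (hxy : x ≠ y) (hy : y ∈ K) {s : ℝ} (hs : 0 < s) (ha : x + s • (x - y) ∈ K) :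
    ∃ s' : ℝ, 0 < s' ∧ x + s' • (x - y) ∈ frontier D ∧
      (1 + δ / (diam K + 1)) * log (1 + s'⁻¹) ≤ log (1 + s⁻¹) := by
  obtain ⟨u, hu, hfr⟩ :=
    exists_pos_add_smul_mem_frontier hD hDb (hKD ha) (sub_ne_zero.2 hxy)
  have hL : 0 < dist x y := dist_pos.2 hxy
  have hfar : δ ≤ u * dist x y := by
    have := hgap _ ha _ hfr
    rwa [dist_self_add_right, norm_smul, Real.norm_eq_abs, abs_of_pos hu, ← dist_eq_norm] at this
  have hnear : (1 + s) * dist x y ≤ diam K := by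
    have := dist_le_diam_of_mem hK ha hy
    rwa [dist_add_smul_sub_right, abs_of_pos (by positivity)] at this
  have hΔ : 0 ≤ diam K := diam_nonneg
  refine ⟨s + u, by positivity, by rwa [add_smul, ← add_assoc], mul_log_one_add_inv_le hs
    (by positivity) ?_⟩
  rw [div_mul_eq_mul_div, add_le_add_iff_left, div_le_iff₀ (by positivity)]
  nlinarith [mul_le_mul_of_nonneg_right hfar (by positivity : (0 : ℝ) ≤ 1 + s)]

end NormedSpace

theorem IsHilbertDist.eq_half_log {D : Set (ℝ × ℝ)} {d : ℝ × ℝ → ℝ × ℝ → ℝ}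
    (hd : IsHilbertDist D d) {x y : ℝ × ℝ} (hx : x ∈ D) (hy : y ∈ D) (hxy : x ≠ y)
    {s t : ℝ} (hs : 0 < s) (ht : 0 < t)
    (ha : x + s • (x - y) ∈ frontier D) (hb : y + t • (y - x) ∈ frontier D) :
    d x y = 1 / 2 * (log (1 + s⁻¹) + log (1 + t⁻¹)) := by
  have hL : 0 < dist x y := dist_pos.2 hxy
  rw [hd.2 x hx y hy hxy _ ha _ hb (left_mem_openSegment_add_smul_sub x y hs)
      (by rw [openSegment_symm]; exact left_mem_openSegment_add_smul_sub y x ht),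
    dist_add_smul_sub_left, dist_add_smul_sub_right, dist_add_smul_sub_left,
    dist_add_smul_sub_right, abs_of_pos hs, abs_of_pos ht, abs_of_pos (by positivity),
    abs_of_pos (by positivity : 0 < 1 + t), dist_comm y x, ← log_mul (by positivity) (by positivity)]
  congr 2
  field_simp
  ring

/-- Expansion of the Hilbert metric under strict inclusion of properly convex domains. -/
theorem hilbert_metric_expansion (D₁ D₂ : Set (ℝ × ℝ))
    (h₁ : ProperlyConvex D₁) (h₂ : ProperlyConvex D₂)
    (hsub : closure D₂ ⊆ D₁)
    (d₁ d₂ : ℝ × ℝ → ℝ × ℝ → ℝ)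
    (hd₁ : IsHilbertDist D₁ d₁) (hd₂ : IsHilbertDist D₂ d₂) :
    ∃ C : ℝ, 1 < C ∧ ∀ x ∈ D₂, ∀ y ∈ D₂, C * d₁ x y ≤ d₂ x y := by
  obtain ⟨-, ho₁, hb₁, -⟩ := h₁
  obtain ⟨-, ho₂, hb₂, -⟩ := h₂
  obtain ⟨δ, hδ, hgap⟩ := hb₂.isCompact_closure.exists_pos_forall_le_dist isClosed_frontier
    (disjoint_of_subset_left hsub (disjoint_iff_inter_eq_empty.2 ho₁.inter_frontier_eq))
  refine ⟨1 + δ / (diam (closure D₂) + 1), lt_add_of_pos_right 1 (by positivity),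
    fun x hx y hy => ?_⟩
  rcases eq_or_ne x y with rfl | hxy
  · simp [hd₁.1 x (hsub (subset_closure hx)), hd₂.1 x hx]
  have hcompare := exists_add_smul_mem_frontier_log_le ho₁ hb₁ hsub hb₂.closure hδ.le hgap
  obtain ⟨s, hs, ha⟩ := exists_pos_add_smul_mem_frontier ho₂ hb₂ hx (sub_ne_zero.2 hxy)
  obtain ⟨t, ht, hb⟩ := exists_pos_add_smul_mem_frontier ho₂ hb₂ hy (sub_ne_zero.2 hxy.symm)
  obtain ⟨s', hs', ha', hlog_s⟩ := hcompare hxy (subset_closure hy) hs (frontier_subset_closure ha)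
  obtain ⟨t', ht', hb', hlog_t⟩ :=
    hcompare hxy.symm (subset_closure hx) ht (frontier_subset_closure hb)
  rw [hd₁.eq_half_log (hsub (subset_closure hx)) (hsub (subset_closure hy)) hxy hs' ht' ha' hb',
    hd₂.eq_half_log hx hy hxy hs ht ha hb]
  linarith
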